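/- arXiv:1409.4615 — 3 statements merged into one kernel-verified Lean document; each statement's English description precedes it below -/
import Mathlib

section
/- Let p be a prime and let (a_s)_{s ∈ ℕ} be a sequence of integers with a_s → +∞. Let (U_s)_{s ∈ ℕ} be a sequence of independent random variables, each distributed according to the Haar probability measure μ on ℤ_p. Then, almost surely, the series ∑_{s=0}^∞ p^{a_s}·U_s converges in ℚ_p, and the law of its sum equals the law of p^{m}·U, where m = min_{s ∈ ℕ} a_s (which is attained since a_s → +∞) and U is a random variable with law μ. -/
/-!
Write `a s = m + b s` with `b s : ℕ`, so that `b s₀ = 0` for some `s₀` and `b s → ∞`. Then the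
series is `p ^ m` times the `ℤ_[p]`-valued series `V = ∑ p ^ (b s) * U s`, which converges for
every `ω` because `p ^ (b s) → 0` in `ℤ_[p]`. Splitting off the term `s₀` gives `V = U s₀ + W`,
where `W` is measurable with respect to `σ(U s : s ≠ s₀)` and hence independent of `U s₀`. So the
law of `V` is `μ ∗ law W`, which is `μ` because a translation-invariant measure absorbs
convolution with any probability measure.
-/

open MeasureTheory

noncomputable instance (p : ℕ) [Fact p.Prime] : MeasurableSpace ℤ_[p] := borel _
instance (p : ℕ) [Fact p.Prime] : BorelSpace ℤ_[p] := ⟨rfl⟩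
noncomputable instance (p : ℕ) [Fact p.Prime] : MeasurableSpace ℚ_[p] := borel _
instance (p : ℕ) [Fact p.Prime] : BorelSpace ℚ_[p] := ⟨rfl⟩

open Filter Topology ProbabilityTheory TopologicalSpace

namespace MeasureTheory.Measure

theorem conv_eq_self_of_isAddRightInvariant {G : Type*} [AddGroup G] [MeasurableSpace G]
    [MeasurableAdd₂ G] (μ ν : Measure G) [SFinite μ] [μ.IsAddRightInvariant]
    [IsProbabilityMeasure ν] : μ ∗ ν = μ := by
  ext s hs
  rw [conv, map_apply measurable_add hs, prod_apply_symm (measurable_add hs)]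
  simp_rw [Set.preimage_preimage, fun y => measure_preimage_add_right μ y s]
  simp

end MeasureTheory.Measure

theorem Measurable.tsum_of_summable {Ω E : Type*} {m : MeasurableSpace Ω} [AddCommMonoid E]
    [TopologicalSpace E] [PseudoMetrizableSpace E] [MeasurableSpace E] [BorelSpace E]
    [MeasurableAdd₂ E] {f : ℕ → Ω → E} (hf : ∀ s, Measurable (f s))
    (hsum : ∀ ω, Summable fun s => f s ω) : Measurable fun ω => ∑' s, f s ω :=
  measurable_of_tendsto_metrizable (fun _ => Finset.measurable_sum _ fun s _ => hf s)
    (tendsto_pi_nhds.mpr fun ω => (hsum ω).hasSum.tendsto_sum_nat)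

theorem ProbabilityTheory.iIndepFun.indepFun_of_measurable_biSup_compl {Ω ι β γ : Type*}
    {mΩ : MeasurableSpace Ω} {P : Measure Ω} [mβ : MeasurableSpace β] [MeasurableSpace γ]
    {U : ι → Ω → β} (hindep : iIndepFun U P) (hU : ∀ j, Measurable (U j)) (i : ι)
    {W : Ω → γ} (hW : Measurable[⨆ j ∈ ({i}ᶜ : Set ι), mβ.comap (U j)] W) :
    IndepFun (U i) W P := by
  rw [IndepFun_iff_Indep]
  refine indep_of_indep_of_le_right (indep_of_indep_of_le_left
    (indep_biSup_compl (fun j => (hU j).comap_le) hindep.iIndep {i}) ?_) hW.comap_le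
  exact le_iSup₂ (f := fun j (_ : j ∈ ({i} : Set ι)) => mβ.comap (U j)) i rfl

namespace PadicInt

variable {p : ℕ} [Fact p.Prime]

theorem summable_mul_of_tendsto_zero {c : ℕ → ℤ_[p]} (hc : Tendsto c atTop (𝓝 0))
    (v : ℕ → ℤ_[p]) : Summable fun s => c s * v s := by
  refine NonarchimedeanAddGroup.summable_of_tendsto_cofinite_zero ?_
  rw [Nat.cofinite_eq_atTop, tendsto_zero_iff_norm_tendsto_zero]
  refine squeeze_zero (fun _ => norm_nonneg _) (fun s => ?_) (tendsto_norm_zero.comp hc)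
  simpa [norm_mul] using mul_le_of_le_one_right (norm_nonneg (c s)) (norm_le_one (v s))

theorem hasSum_zpow_add_mul (m : ℤ) {b : ℕ → ℕ} {v : ℕ → ℤ_[p]}
    (hv : Summable fun s => (p : ℤ_[p]) ^ b s * v s) :
    HasSum (fun s => (p : ℚ_[p]) ^ (m + b s) * v s)
      ((p : ℚ_[p]) ^ m * ↑(∑' s, (p : ℤ_[p]) ^ b s * v s)) := by
  have hp : (p : ℚ_[p]) ≠ 0 := Nat.cast_ne_zero.mpr (Fact.out : p.Prime).ne_zero
  refine ((hv.hasSum.map Coe.ringHom continuous_subtype_val).mul_left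
    ((p : ℚ_[p]) ^ m)).congr_fun fun s => ?_
  rw [Function.comp_apply, map_mul, map_pow, map_natCast, zpow_add₀ hp, zpow_natCast, mul_assoc]
  rfl

variable {Ω : Type*} [MeasurableSpace Ω] {P : Measure Ω} [IsProbabilityMeasure P]
  {U : ℕ → Ω → ℤ_[p]} {c : ℕ → ℤ_[p]} {s₀ : ℕ} {μ : Measure ℤ_[p]} [μ.IsAddLeftInvariant]

theorem map_tsum_mul_eq (hindep : iIndepFun U P) (hU : ∀ s, Measurable (U s))
    (hc : Tendsto c atTop (𝓝 0)) (hc₀ : c s₀ = 1) (hlaw : P.map (U s₀) = μ) :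
    P.map (fun ω => ∑' s, c s * U s ω) = μ := by
  subst hlaw
  set W : Ω → ℤ_[p] := fun ω => ∑' s, if s = s₀ then 0 else c s * U s ω
  have hsum (ω : Ω) := summable_mul_of_tendsto_zero hc fun s => U s ω
  have hsplit : (fun ω => ∑' s, c s * U s ω) = U s₀ + W := by
    funext ω
    rw [((hsum ω).update s₀ 0).tsum_eq_add_tsum_ite' s₀, hc₀, one_mul]
    rfl
  have hW : Measurable[⨆ j ∈ ({s₀}ᶜ : Set ℕ), MeasurableSpace.comap (U j) inferInstance] W := by
    refine Measurable.tsum_of_summable (fun s => ?_) fun ω => ?_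
    · by_cases h : s = s₀
      · simp [h]
      · simp only [h, if_false]
        exact ((comap_measurable (U s)).mono (le_iSup₂ (f := fun j (_ : j ∈ ({s₀}ᶜ : Set ℕ)) =>
          MeasurableSpace.comap (U j) inferInstance) s h) le_rfl).const_mul (c s)
    · exact ((hsum ω).update s₀ 0).congr fun s => Function.update_apply ..
  have hWae : AEMeasurable W P :=
    (hW.mono (iSup₂_le fun j _ => (hU j).comap_le) le_rfl).aemeasurable
  have := Measure.isProbabilityMeasure_map (μ := P) hWae
  rw [hsplit, (hindep.indepFun_of_measurable_biSup_compl hU s₀ hW).map_add_eq_map_conv_map₀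
    (hU s₀).aemeasurable hWae, Measure.conv_eq_self_of_isAddRightInvariant]

theorem map_tsum_mul_eq₀ (hindep : iIndepFun U P) (hU : ∀ s, AEMeasurable (U s) P)
    (hc : Tendsto c atTop (𝓝 0)) (hc₀ : c s₀ = 1) (hlaw : P.map (U s₀) = μ) :
    P.map (fun ω => ∑' s, c s * U s ω) = μ := by
  have hUU' (s : ℕ) := (hU s).ae_eq_mk
  calc P.map (fun ω => ∑' s, c s * U s ω) = P.map (fun ω => ∑' s, c s * (hU s).mk _ ω) := by
        refine Measure.map_congr ?_
        filter_upwards [ae_all_iff.mpr hUU'] with ω hω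
        simp only [hω]
    _ = μ := map_tsum_mul_eq (hindep.congr hUU') (fun s => (hU s).measurable_mk) hc hc₀
        ((Measure.map_congr (hUU' s₀)).symm.trans hlaw)

end PadicInt

theorem trivial_key_lemma_infinite_general (p : ℕ) [Fact p.Prime]
    (μ : Measure ℤ_[p]) [μ.IsAddHaarMeasure]
    {Ω : Type*} [MeasurableSpace Ω] (P : Measure Ω) [IsProbabilityMeasure P]
    (U : ℕ → Ω → ℤ_[p])
    (hindep : ProbabilityTheory.iIndepFun U P)
    (hlaw : ∀ s, Measure.map (U s) P = μ)
    (a : ℕ → ℤ) (ha : Filter.Tendsto a Filter.atTop Filter.atTop)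
    (m : ℤ) (hm : IsLeast (Set.range a) m) :
    (∀ᵐ ω ∂P, Summable (fun s => (p : ℚ_[p]) ^ (a s) * (U s ω : ℚ_[p]))) ∧
      Measure.map (fun ω => ∑' s, (p : ℚ_[p]) ^ (a s) * (U s ω : ℚ_[p])) P
        = Measure.map (fun u : ℤ_[p] => (p : ℚ_[p]) ^ m * (u : ℚ_[p])) μ := by
  obtain ⟨b, rfl⟩ : ∃ b : ℕ → ℕ, a = fun s => m + b s :=
    ⟨fun s => (a s - m).toNat, funext fun s => by have := hm.2 ⟨s, rfl⟩; dsimp only; omega⟩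
  obtain ⟨s₀, hs₀⟩ := hm.1
  have hb : Tendsto b atTop atTop :=
    tendsto_natCast_atTop_iff.mp (by simpa using tendsto_atTop_add_const_left atTop (-m) ha)
  have hc : Tendsto (fun s => (p : ℤ_[p]) ^ b s) atTop (𝓝 0) :=
    (tendsto_pow_atTop_nhds_zero_of_norm_lt_one (x := (p : ℤ_[p])) Padic.norm_p_lt_one).comp hb
  have hsum (ω : Ω) := PadicInt.hasSum_zpow_add_mul m
    (PadicInt.summable_mul_of_tendsto_zero hc fun s => U s ω)
  refine ⟨.of_forall fun ω => (hsum ω).summable, ?_⟩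
  have hU (s : ℕ) : AEMeasurable (U s) P :=
    aemeasurable_of_map_neZero (by rw [hlaw s]; infer_instance)
  have hV := PadicInt.map_tsum_mul_eq₀ hindep hU hc
    (by simp [show b s₀ = 0 by simpa using hs₀]) (hlaw s₀)
  simp_rw [fun ω => (hsum ω).tsum_eq]
  have hg : Continuous fun u : ℤ_[p] => (p : ℚ_[p]) ^ m * (u : ℚ_[p]) :=
    continuous_const.mul continuous_subtype_val
  rw [← hV, AEMeasurable.map_map_of_aemeasurable hg.aemeasurable
    (aemeasurable_of_map_neZero (by rw [hV]; infer_instance))]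
  rfl

/-- Infinite-time version of the "trivial key Lemma": if `(U_s)` are i.i.d. Haar
on `ℤ_p` and `a_s → +∞` in `ℤ`, then a.s. the series `∑ p^(a_s)·U_s` converges in
`ℚ_p` and its sum has the same law as `p^m·U`, where `m = min_s a_s`. -/
theorem trivial_key_lemma_infinite (p : ℕ) [Fact p.Prime]
    (μ : Measure ℤ_[p]) [μ.IsAddHaarMeasure] [IsProbabilityMeasure μ]
    {Ω : Type*} [MeasurableSpace Ω] (P : Measure Ω) [IsProbabilityMeasure P]
    (U : ℕ → Ω → ℤ_[p])
    (hindep : ProbabilityTheory.iIndepFun U P)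
    (hlaw : ∀ s, Measure.map (U s) P = μ)
    (a : ℕ → ℤ) (ha : Filter.Tendsto a Filter.atTop Filter.atTop)
    (m : ℤ) (hm : IsLeast (Set.range a) m) :
    (∀ᵐ ω ∂P, Summable (fun s => (p : ℚ_[p]) ^ (a s) * (U s ω : ℚ_[p]))) ∧
      Measure.map (fun ω => ∑' s, (p : ℚ_[p]) ^ (a s) * (U s ω : ℚ_[p])) P
        = Measure.map (fun u : ℤ_[p] => (p : ℚ_[p]) ^ m * (u : ℚ_[p])) μ :=
  trivial_key_lemma_infinite_general p μ P U hindep hlaw a ha m hm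
end

section
/- Let V be a real vector space, let α : V → ℝ and z : V → ℝ be linear functionals, and let α^∨ ∈ V satisfy α(α^∨) = 2. Define the reflection s : V → V by s(v) = v − α(v)·α^∨. Let S ⊆ V be a finite set that is stable under s (i.e., s maps S onto S). Assume z(α^∨) > 0 and that there exists μ₀ ∈ S with α(μ₀) ≠ 0. Then ∑_{μ ∈ S} α(μ)·exp(z(μ)) > 0. -/
/-!
Pairing the sum with its image under the reflection `s`, which permutes `S` and negates `α`,
gives `2 ∑ α(μ) e^{z(μ)} = ∑ α(μ) (e^{z(μ)} - e^{z(s μ)})`. Since `z(μ) - z(s μ) = α(μ) z(α^∨)`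
and `exp` is increasing, every summand is nonnegative, and it is positive as soon as `α(μ) ≠ 0`.
-/

open Module

theorem Finset.sum_comp_of_involutive {ι M : Type*} [AddCommMonoid M] {S : Finset ι}
    {σ : ι → ι} (hσ : Function.Involutive σ) (hS : ∀ i ∈ S, σ i ∈ S) (g : ι → M) :
    ∑ i ∈ S, g (σ i) = ∑ i ∈ S, g i :=
  Finset.sum_nbij' σ σ hS hS (fun i _ ↦ hσ i) (fun i _ ↦ hσ i) fun _ _ ↦ rfl

theorem Monotone.mul_sub_nonneg {f : ℝ → ℝ} (hf : Monotone f) {a u v : ℝ}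
    (h : 0 ≤ a * (u - v)) : 0 ≤ a * (f u - f v) := by
  rcases mul_nonneg_iff.1 h with ⟨ha, huv⟩ | ⟨ha, huv⟩
  · exact mul_nonneg ha (sub_nonneg.2 (hf (sub_nonneg.1 huv)))
  · exact mul_nonneg_of_nonpos_of_nonpos ha (sub_nonpos.2 (hf (sub_nonpos.1 huv)))

theorem StrictMono.mul_sub_pos {f : ℝ → ℝ} (hf : StrictMono f) {a u v : ℝ}
    (h : 0 < a * (u - v)) : 0 < a * (f u - f v) := by
  rcases mul_pos_iff.1 h with ⟨ha, huv⟩ | ⟨ha, huv⟩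
  · exact mul_pos ha (sub_pos.2 (hf (sub_pos.1 huv)))
  · exact mul_pos_of_neg_of_neg ha (sub_neg.2 (hf (sub_neg.1 huv)))

namespace Module

variable {R M : Type*} [CommRing R] [AddCommGroup M] [Module R M] {x : M} {f : Dual R M}

theorem apply_reflection_eq_neg (h : f x = 2) (y : M) : f (reflection h y) = -f y := by
  rw [reflection_apply, map_sub, map_smul, h, smul_eq_mul]
  ring

theorem sub_apply_reflection (h : f x = 2) (g : Dual R M) (y : M) :
    g y - g (reflection h y) = f y * g x := by
  rw [reflection_apply, map_sub, map_smul, smul_eq_mul]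
  ring

theorem two_mul_sum_eq_sum_mul_sub_reflection (h : f x = 2) {S : Finset M}
    (hS : ∀ y ∈ S, reflection h y ∈ S) (g : M → R) :
    2 * ∑ y ∈ S, f y * g y = ∑ y ∈ S, f y * (g y - g (reflection h y)) := by
  have hflip : ∑ y ∈ S, f y * g y = -∑ y ∈ S, f y * g (reflection h y) := by
    rw [← Finset.sum_comp_of_involutive (involutive_reflection h) hS, ← Finset.sum_neg_distrib]
    simp only [apply_reflection_eq_neg, neg_mul]
  rw [two_mul]
  nth_rewrite 2 [hflip]
  rw [← sub_eq_add_neg, ← Finset.sum_sub_distrib]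
  simp only [mul_sub]

end Module

/-- Core of the drift lemma (Lemma 2.6): if `S` is a finite set of vectors stable
under the reflection `s(v) = v - α(v)·α^∨` (with `α(α^∨) = 2`), `z(α^∨) > 0`, and
`α` does not vanish identically on `S`, then `∑_{μ ∈ S} α(μ)·exp(z(μ)) > 0`. -/
theorem drift_positive {V : Type*} [AddCommGroup V] [Module ℝ V]
    (α z : V →ₗ[ℝ] ℝ) (coroot : V) (hpair : α coroot = 2)
    (S : Finset V) (hstable : ∀ μ ∈ S, μ - α μ • coroot ∈ S)
    (hz : 0 < z coroot) (hne : ∃ μ₀ ∈ S, α μ₀ ≠ 0) :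
    0 < ∑ μ ∈ S, α μ * Real.exp (z μ) := by
  set s := reflection hpair
  have hS : ∀ μ ∈ S, s μ ∈ S := fun μ hμ ↦ by simpa [s, reflection_apply] using hstable μ hμ
  have hdiff : ∀ μ, α μ * (z μ - z (s μ)) = α μ ^ 2 * z coroot := fun μ ↦ by
    rw [sub_apply_reflection]
    ring
  obtain ⟨μ₀, hμ₀S, hμ₀⟩ := hne
  have hsum := two_mul_sum_eq_sum_mul_sub_reflection hpair hS fun μ ↦ Real.exp (z μ)
  have hpos : 0 < ∑ μ ∈ S, α μ * (Real.exp (z μ) - Real.exp (z (s μ))) := by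
    refine Finset.sum_pos' (fun μ _ ↦ Real.exp_monotone.mul_sub_nonneg ?_)
      ⟨μ₀, hμ₀S, Real.exp_strictMono.mul_sub_pos ?_⟩
    · rw [hdiff]; positivity
    · rw [hdiff]; exact mul_pos (pow_two_pos_of_ne_zero hμ₀) hz
  linarith
end

section
/- Let p be a prime, n ≥ 1, and let (N_t)_{t ∈ ℕ} be a sequence of n×n matrices over ℚ_p that are lower unitriangular (i.e., (N_t)_{ii} = 1 for all i and (N_t)_{ij} = 0 whenever i < j). Suppose the multiplicative increments Δ_t := N_t^{−1} · N_{t+1} converge to the identity matrix as t → ∞ (entrywise in the p-adic topology). Then the sequence (N_t) converges entrywise to some lower unitriangular matrix N_∞ over ℚ_p. -/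
/-!
Write `Δ_t = N_t⁻¹ N_{t+1}`, so that `N_{t+1} - N_t = N_t (Δ_t - 1)`. Over an ultrametric field the
entrywise sup norm of matrices is submultiplicative, so once `‖Δ_t - 1‖ ≤ 1` the ultrametric
inequality gives `‖N_{t+1}‖ ≤ ‖N_t‖`. Hence `N_t` is eventually bounded, its increments tend to
zero, and in an ultrametric space this alone makes the sequence Cauchy. Unitriangularity is a
closed condition, so it passes to the limit.
-/

open Filter Topology

section Ultrametric

variable {E : Type*} [SeminormedAddCommGroup E] [IsUltrametricDist E] {x : ℕ → E} {ε : ℕ → ℝ}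

theorem norm_succ_le_of_norm_sub_le_mul {t : ℕ} (hx : ‖x (t + 1) - x t‖ ≤ ‖x t‖ * ε t)
    (hε : ε t ≤ 1) : ‖x (t + 1)‖ ≤ ‖x t‖ :=
  calc ‖x (t + 1)‖ = ‖x t + (x (t + 1) - x t)‖ := by rw [add_sub_cancel]
    _ ≤ max ‖x t‖ ‖x (t + 1) - x t‖ := IsUltrametricDist.norm_add_le_max _ _
    _ ≤ ‖x t‖ := max_le le_rfl (hx.trans (mul_le_of_le_one_right (norm_nonneg _) hε))

theorem exists_eventually_norm_le_of_norm_sub_le_mul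
    (hx : ∀ t, ‖x (t + 1) - x t‖ ≤ ‖x t‖ * ε t) (hε : Tendsto ε atTop (𝓝 0)) :
    ∃ M, ∀ᶠ t in atTop, ‖x t‖ ≤ M := by
  obtain ⟨T, hT⟩ := eventually_atTop.1 (hε.eventually (ge_mem_nhds zero_lt_one))
  refine ⟨‖x T‖, eventually_atTop.2 ⟨T, fun t ht => ?_⟩⟩
  induction t, ht using Nat.le_induction with
  | base => rfl
  | succ t ht ih => exact (norm_succ_le_of_norm_sub_le_mul (hx t) (hT t ht)).trans ih

theorem cauchySeq_of_norm_sub_le_mul (hx : ∀ t, ‖x (t + 1) - x t‖ ≤ ‖x t‖ * ε t)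
    (hε₀ : ∀ t, 0 ≤ ε t) (hε : Tendsto ε atTop (𝓝 0)) : CauchySeq x := by
  obtain ⟨M, hM⟩ := exists_eventually_norm_le_of_norm_sub_le_mul hx hε
  refine NonarchimedeanAddGroup.cauchySeq_of_tendsto_sub_nhds_zero
    (squeeze_zero_norm' ?_ (by simpa using hε.const_mul M))
  filter_upwards [hM] with t ht
  exact (hx t).trans (mul_le_mul_of_nonneg_right ht (hε₀ t))

end Ultrametric

namespace Matrix

variable {l m n R : Type*}

section SupNorm

attribute [local instance] Matrix.seminormedAddCommGroup

instance isUltrametricDist [Fintype m] [Fintype n] [SeminormedAddCommGroup R]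
    [IsUltrametricDist R] : IsUltrametricDist (Matrix m n R) :=
  inferInstanceAs (IsUltrametricDist (m → n → R))

theorem norm_mul_le_of_isUltrametricDist [Fintype l] [Fintype m] [Fintype n] [SeminormedRing R]
    [IsUltrametricDist R] (A : Matrix l m R) (B : Matrix m n R) : ‖A * B‖ ≤ ‖A‖ * ‖B‖ := by
  refine (norm_le_iff (by positivity)).2 fun i j => ?_
  refine IsUltrametricDist.norm_sum_le_of_forall_le_of_nonneg (by positivity) fun k _ => ?_
  exact (norm_mul_le _ _).trans (mul_le_mul (norm_entry_le_entrywise_sup_norm A)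
    (norm_entry_le_entrywise_sup_norm B) (norm_nonneg _) (norm_nonneg _))

theorem cauchySeq_of_tendsto_inv_mul_succ_nhds_one [Fintype n] [DecidableEq n] [NormedField R]
    [IsUltrametricDist R] {N : ℕ → Matrix n n R} (hdet : ∀ t, IsUnit (N t).det)
    (h : Tendsto (fun t => (N t)⁻¹ * N (t + 1)) atTop (𝓝 1)) : CauchySeq N := by
  refine cauchySeq_of_norm_sub_le_mul (ε := fun t => ‖(N t)⁻¹ * N (t + 1) - 1‖) (fun t => ?_)
    (fun _ => norm_nonneg _) (by simpa using (h.sub_const 1).norm)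
  calc ‖N (t + 1) - N t‖ = ‖N t * ((N t)⁻¹ * N (t + 1) - 1)‖ := by
        rw [Matrix.mul_sub, mul_nonsing_inv_cancel_left _ _ (hdet t), Matrix.mul_one]
    _ ≤ _ := norm_mul_le_of_isUltrametricDist _ _

end SupNorm

theorem det_eq_one_of_unitriangular [Fintype n] [DecidableEq n] [LinearOrder n] [CommRing R]
    {A : Matrix n n R} (hdiag : ∀ i, A i i = 1) (hlower : ∀ i j, i < j → A i j = 0) :
    A.det = 1 := by
  rw [det_of_isLowerTriangular A hlower]
  simp [hdiag]

theorem isClosed_setOf_unitriangular [LT n] [TopologicalSpace R] [T1Space R] [Zero R] [One R] :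
    IsClosed {A : Matrix n n R | (∀ i, A i i = 1) ∧ ∀ i j, i < j → A i j = 0} := by
  simp only [Set.ofPred_and, Set.ofPred_forall]
  exact (isClosed_iInter fun i => isClosed_singleton.preimage (continuous_id.matrix_elem i i)).inter
    (isClosed_iInter fun i => isClosed_iInter fun j => isClosed_iInter fun _ =>
      isClosed_singleton.preimage (continuous_id.matrix_elem i j))

end Matrix

theorem unitriangular_convergence_general (p n : ℕ) [Fact p.Prime]
    (N : ℕ → Matrix (Fin n) (Fin n) ℚ_[p])
    (hN : ∀ t, (∀ i, N t i i = 1) ∧ ∀ i j : Fin n, i < j → N t i j = 0)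
    (hconv : Tendsto (fun t => (N t)⁻¹ * N (t + 1)) atTop (nhds 1)) :
    ∃ L : Matrix (Fin n) (Fin n) ℚ_[p],
      ((∀ i, L i i = 1) ∧ ∀ i j : Fin n, i < j → L i j = 0) ∧
        Tendsto N atTop (nhds L) := by
  have hdet : ∀ t, IsUnit (N t).det := fun t => by
    rw [Matrix.det_eq_one_of_unitriangular (hN t).1 (hN t).2]
    exact isUnit_one
  obtain ⟨L, hL⟩ := cauchySeq_tendsto_of_complete
    (Matrix.cauchySeq_of_tendsto_inv_mul_succ_nhds_one hdet hconv)
  exact ⟨L, Matrix.isClosed_setOf_unitriangular.mem_of_tendsto hL (Eventually.of_forall hN), hL⟩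

/-- Deterministic convergence theorem (Theorem 6.1) for the unipotent group of
`GL_n(ℚ_p)`: a sequence of lower unitriangular matrices over `ℚ_p` whose
multiplicative increments `N_t⁻¹ · N_{t+1}` tend to the identity converges
(entrywise) to a lower unitriangular matrix. -/
theorem unitriangular_convergence (p n : ℕ) [Fact p.Prime] (hn : 1 ≤ n)
    (N : ℕ → Matrix (Fin n) (Fin n) ℚ_[p])
    (hN : ∀ t, (∀ i, N t i i = 1) ∧ ∀ i j : Fin n, i < j → N t i j = 0)
    (hconv : Tendsto (fun t => (N t)⁻¹ * N (t + 1)) atTop (nhds 1)) :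
    ∃ L : Matrix (Fin n) (Fin n) ℚ_[p],
      ((∀ i, L i i = 1) ∧ ∀ i j : Fin n, i < j → L i j = 0) ∧
        Tendsto N atTop (nhds L) :=
  unitriangular_convergence_general p n N hN hconv
end
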